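/- Let R be an associative unital ring (not necessarily commutative), α : ℤ → R a family of elements, and S_s^k(n) the associated non-commutative Svinin polynomials. Let m ≥ 0 be an integer and let d_0, d_2, …, d_{2m} be central elements of R. Define P_{0,n} := Σ_{r=0}^{m} d_{2r} · S_{r+1}^r(n+r−1) and F_n := Σ_{r=1}^{m+1} d_{2(r−1)} · S_r^r(n+r−1) + n·1 (where n·1 denotes the image of the integer n in R). Then for every n ∈ ℤ, F_n − F_{n−1} = 1 + α_n · P_{0,n+1} − P_{0,n−1} · α_{n−1}. -/

import Mathlib

/-!
Unfolding the definition gives the recursion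
`S_{s+1}^{k+1}(n) = α_{n-k} S_{s+1}^k(n) + S_s^{k+1}(n-1)`, and a double induction on `k` and `s`
gives its mirror image `S_{s+1}^{k+1}(n) = S_s^{k+1}(n) + S_{s+1}^k(n-1) α_{n-s}`.
Subtracting the second at `n - 1` from the first at `n` cancels `S_s^{k+1}(n-1)`, so
`S_{s+1}^{k+1}(n) - S_{s+1}^{k+1}(n-1) = α_{n-k} S_{s+1}^k(n) - S_{s+1}^k(n-2) α_{n-1-s}`.
On the diagonal `s = k = t`, at `n + t`, this is the `t`-th term of the claimed identity once
multiplied by the central `d_t`; the term `n·1` of `F_n` contributes the `1`.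
-/

/-- Non-commutative Svinin polynomials: `svinin α s k n` is `S_s^k(n)`, defined by
`S_s^0(n) = 1` and `S_s^k(n) = Σ_{j=0}^{s−1} α_{n−k−j+1} · S_{s−j}^{k−1}(n−j)` for `k ≥ 1`. -/
def svinin {R : Type*} [Ring R] (α : ℤ → R) : ℕ → ℕ → ℤ → R
  | _, 0, _ => 1
  | s, k + 1, n =>
      ∑ j ∈ Finset.range s,
        α (n - ((k : ℤ) + 1) - (j : ℤ) + 1) * svinin α (s - j) k (n - (j : ℤ))

/-- `P0 α m d n` is `P_{0,n} = Σ_{r=0}^{m} d_{2r} · S_{r+1}^r(n+r−1)`,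
where `d r` stands for `d_{2r}`. -/
def P0 {R : Type*} [Ring R] (α : ℤ → R) (m : ℕ) (d : ℕ → R) (n : ℤ) : R :=
  ∑ r ∈ Finset.range (m + 1), d r * svinin α (r + 1) r (n + (r : ℤ) - 1)

/-- `Fgam α m d n` is `F_n = Σ_{r=1}^{m+1} d_{2(r−1)} · S_r^r(n+r−1) + n·1`. -/
def Fgam {R : Type*} [Ring R] (α : ℤ → R) (m : ℕ) (d : ℕ → R) (n : ℤ) : R :=
  (∑ r ∈ Finset.Icc 1 (m + 1), d (r - 1) * svinin α r r (n + (r : ℤ) - 1)) + (n : R)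

section Svinin

variable {R : Type*} [Ring R] (α : ℤ → R)

@[simp]
theorem svinin_zero (s : ℕ) (n : ℤ) : svinin α s 0 n = 1 := by
  simp [svinin]

@[simp]
theorem svinin_zero_succ (k : ℕ) (n : ℤ) : svinin α 0 (k + 1) n = 0 := by
  simp [svinin]

theorem svinin_succ_succ (s k : ℕ) (n : ℤ) :
    svinin α (s + 1) (k + 1) n = α (n - k) * svinin α (s + 1) k n + svinin α s (k + 1) (n - 1) := by
  rw [svinin, Finset.sum_range_succ', add_comm, svinin]
  congr 1
  · simp only [CharP.cast_eq_zero, sub_zero]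
    congr 2
    ring
  · refine Finset.sum_congr rfl fun j _ => ?_
    rw [Nat.add_sub_add_right]
    congr 2 <;> push_cast <;> ring

theorem svinin_succ_succ' (s k : ℕ) (n : ℤ) :
    svinin α (s + 1) (k + 1) n = svinin α s (k + 1) n + svinin α (s + 1) k (n - 1) * α (n - s) := by
  induction k generalizing s n with
  | zero =>
    induction s generalizing n with
    | zero => simp [svinin_succ_succ]
    | succ s ih =>
      rw [svinin_succ_succ α (s + 1), ih, svinin_succ_succ α s 0 n,
        show n - 1 - (s : ℤ) = n - (s + 1 : ℕ) by push_cast; ring]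
      simp only [svinin_zero]
      abel
  | succ k ihk =>
    induction s generalizing n with
    | zero =>
      rw [svinin_succ_succ, ihk, svinin_succ_succ α 0 k (n - 1),
        show n - 1 - (k : ℤ) = n - (k + 1 : ℕ) by push_cast; ring]
      simp [mul_assoc]
    | succ s ihs =>
      rw [svinin_succ_succ α (s + 1), ihk, ihs, svinin_succ_succ α s (k + 1) n,
        svinin_succ_succ α (s + 1) k (n - 1),
        show n - 1 - (k : ℤ) = n - (k + 1 : ℕ) by push_cast; ring,
        show n - 1 - (s : ℤ) = n - (s + 1 : ℕ) by push_cast; ring]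
      noncomm_ring

theorem svinin_sub_svinin_sub_one (s k : ℕ) (n : ℤ) :
    svinin α (s + 1) (k + 1) n - svinin α (s + 1) (k + 1) (n - 1)
      = α (n - k) * svinin α (s + 1) k n - svinin α (s + 1) k (n - 2) * α (n - 1 - s) := by
  rw [svinin_succ_succ, svinin_succ_succ', show n - 1 - 1 = n - 2 by ring]
  abel

theorem svinin_diagonal_sub (t : ℕ) (n : ℤ) :
    svinin α (t + 1) (t + 1) (n + t) - svinin α (t + 1) (t + 1) (n - 1 + t)
      = α n * svinin α (t + 1) t (n + 1 + t - 1) - svinin α (t + 1) t (n - 1 + t - 1) * α (n - 1) := by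
  have h := svinin_sub_svinin_sub_one α t t (n + t)
  rw [add_sub_cancel_right, show n + t - 1 - t = n - 1 by ring, show n + t - 1 = n - 1 + t by ring,
    show n + t - 2 = n - 1 + t - 1 by ring] at h
  rwa [show n + 1 + t - 1 = n + t by ring]

end Svinin

theorem Fgam_eq_sum_range {R : Type*} [Ring R] (α : ℤ → R) (m : ℕ) (d : ℕ → R) (n : ℤ) :
    Fgam α m d n = ∑ t ∈ Finset.range (m + 1), d t * svinin α (t + 1) (t + 1) (n + t) + n := by
  rw [Fgam, ← Finset.Ico_add_one_right_eq_Icc, Finset.sum_Ico_eq_sum_range, add_tsub_cancel_right]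
  congr 1
  refine Finset.sum_congr rfl fun t _ => ?_
  rw [add_tsub_cancel_left, add_comm 1 t]
  congr 2
  push_cast
  ring

/-- For every `n ∈ ℤ`: `F_n − F_{n−1} = 1 + α_n · P_{0,n+1} − P_{0,n−1} · α_{n−1}`. -/
theorem dPI_gamma_difference {R : Type*} [Ring R] (α : ℤ → R)
    (m : ℕ) (d : ℕ → R) (hd : ∀ k ≤ m, d k ∈ Set.center R) (n : ℤ) :
    Fgam α m d n - Fgam α m d (n - 1)
      = 1 + α n * P0 α m d (n + 1) - P0 α m d (n - 1) * α (n - 1) := by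
  calc Fgam α m d n - Fgam α m d (n - 1)
      = ∑ t ∈ Finset.range (m + 1), d t * (svinin α (t + 1) (t + 1) (n + t)
          - svinin α (t + 1) (t + 1) (n - 1 + t)) + 1 := by
        simp only [Fgam_eq_sum_range, mul_sub, Finset.sum_sub_distrib]
        push_cast
        abel
    _ = ∑ t ∈ Finset.range (m + 1), (α n * (d t * svinin α (t + 1) t (n + 1 + t - 1))
          - d t * svinin α (t + 1) t (n - 1 + t - 1) * α (n - 1)) + 1 := by
        refine congrArg (· + 1) (Finset.sum_congr rfl fun t ht => ?_)
        have hdt := (Set.mem_center_iff.mp (hd t (Nat.lt_succ_iff.mp (Finset.mem_range.mp ht)))).comm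
        rw [svinin_diagonal_sub, mul_sub, ← mul_assoc, (hdt (α n)).eq, mul_assoc, mul_assoc]
    _ = 1 + α n * P0 α m d (n + 1) - P0 α m d (n - 1) * α (n - 1) := by
        rw [Finset.sum_sub_distrib, ← Finset.mul_sum, ← Finset.sum_mul, P0, P0]
        abel
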